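/- For any n ≥ d ≥ 1 and m ≥ 1, P(n+m, d) ≥ P(n+m, m, d) · P(n, d). -/

import Mathlib

/-- The Chebyshev distance between two functions on `{1,…,m}`
(represented on `Fin m`): `max_i |σ(i) − τ(i)|`. -/
def cheb {m : ℕ} (σ τ : Fin m → ℕ) : ℕ :=
  Finset.univ.sup fun i => Nat.dist (σ i) (τ i)

/-- `Pnm n m d` is the maximum cardinality of a set of injective functions
from `{1,…,m}` to `{1,…,n}` whose pairwise Chebyshev distance is at least
`d`. -/
noncomputable def Pnm (n m d : ℕ) : ℕ :=
  sSup {k | ∃ A : Finset (Fin m → ℕ),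
    (∀ σ ∈ A, Function.Injective σ ∧ ∀ i, σ i ∈ Finset.Icc 1 n) ∧
    (∀ σ ∈ A, ∀ τ ∈ A, σ ≠ τ → d ≤ cheb σ τ) ∧ A.card = k}

/-- `P n d` is the maximum cardinality of a set of permutations of `{1,…,n}`
(i.e. injective functions from the `n`-element set `{1,…,n}` to `{1,…,n}`)
whose pairwise Chebyshev distance is at least `d`. -/
noncomputable def P (n d : ℕ) : ℕ := Pnm n n d

/-!
Take an optimal code `A` of injections `{1,…,m} → {1,…,n+m}` and an optimal permutation code `B`
on `{1,…,n}`. For `σ ∈ A`, listing the `n` values missed by `σ` in increasing order gives an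
order-preserving relabelling of `{1,…,n}`, which never decreases distances. Gluing the
relabelled `τ ∈ B` (first `n` positions) to `σ` (last `m` positions) yields a permutation of
`{1,…,n+m}`. Two glued permutations are at distance at least `d` on the `σ`-part if their `σ`s
differ, and on the `τ`-part otherwise, so the `|A| |B|` of them form a code.
-/

open Finset Function

section Chebyshev

variable {m n : ℕ}

lemma dist_le_cheb (σ τ : Fin m → ℕ) (i : Fin m) : Nat.dist (σ i) (τ i) ≤ cheb σ τ :=
  le_sup (f := fun i => Nat.dist (σ i) (τ i)) (mem_univ i)

lemma cheb_le_cheb_comp {f : ℕ → ℕ} {s : Set ℕ}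
    (hf : ∀ x ∈ s, ∀ y ∈ s, Nat.dist x y ≤ Nat.dist (f x) (f y))
    {σ τ : Fin m → ℕ} (hσ : ∀ i, σ i ∈ s) (hτ : ∀ i, τ i ∈ s) :
    cheb σ τ ≤ cheb (f ∘ σ) (f ∘ τ) :=
  Finset.sup_le fun i _ => (hf _ (hσ i) _ (hτ i)).trans (dist_le_cheb (f ∘ σ) (f ∘ τ) i)

lemma cheb_le_cheb_append_left (a a' : Fin n → ℕ) (b b' : Fin m → ℕ) :
    cheb a a' ≤ cheb (Fin.append a b) (Fin.append a' b') :=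
  Finset.sup_le fun i _ => by
    simpa using dist_le_cheb (Fin.append a b) (Fin.append a' b') (Fin.castAdd m i)

lemma cheb_le_cheb_append_right (a a' : Fin n → ℕ) (b b' : Fin m → ℕ) :
    cheb b b' ≤ cheb (Fin.append a b) (Fin.append a' b') :=
  Finset.sup_le fun i _ => by
    simpa using dist_le_cheb (Fin.append a b) (Fin.append a' b') (Fin.natAdd n i)

end Chebyshev

lemma StrictMonoOn.sub_le_sub_nat {f : ℕ → ℕ} {k : ℕ} (hf : StrictMonoOn f (Set.Iio k))
    {a b : ℕ} (hab : a ≤ b) (hb : b < k) : b - a ≤ f b - f a := by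
  induction b, hab using Nat.le_induction with
  | base => simp
  | succ b hab ih =>
    have hstep := hf (show b < k by omega) hb (Nat.lt_succ_self b)
    have hmono := hf.monotoneOn (show a < k by omega) (show b < k by omega) hab
    have := ih (by omega)
    omega

lemma StrictMonoOn.dist_le_dist_nat {f : ℕ → ℕ} {k : ℕ} (hf : StrictMonoOn f (Set.Iio k))
    {a b : ℕ} (ha : a < k) (hb : b < k) : Nat.dist a b ≤ Nat.dist (f a) (f b) := by
  rcases le_total a b with hab | hab
  · have := hf.sub_le_sub_nat hab hb
    have := hf.monotoneOn ha hb hab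
    simp only [Nat.dist]
    omega
  · have := hf.sub_le_sub_nat hab ha
    have := hf.monotoneOn hb ha hab
    simp only [Nat.dist]
    omega

noncomputable def nthSmallest (S : Finset ℕ) (v : ℕ) : ℕ :=
  Nat.nth (· ∈ S) (v - 1)

section NthSmallest

variable {S : Finset ℕ} {v w : ℕ}

lemma nthSmallest_mem (hv : v ∈ Icc 1 #S) : nthSmallest S v ∈ S := by
  rw [mem_Icc] at hv
  exact Nat.nth_mem_of_lt_card (p := (· ∈ S)) S.finite_toSet
    (by rw [finite_toSet_toFinset]; omega)

lemma dist_le_dist_nthSmallest (hv : v ∈ Icc 1 #S) (hw : w ∈ Icc 1 #S) :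
    Nat.dist v w ≤ Nat.dist (nthSmallest S v) (nthSmallest S w) := by
  rw [mem_Icc] at hv hw
  have hmono := Nat.nth_strictMonoOn (p := (· ∈ S)) S.finite_toSet
  rw [finite_toSet_toFinset] at hmono
  calc Nat.dist v w = Nat.dist (v - 1) (w - 1) := by simp only [Nat.dist]; omega
    _ ≤ _ := hmono.dist_le_dist_nat (show v - 1 < #S by omega) (show w - 1 < #S by omega)

lemma nthSmallest_injOn : Set.InjOn (nthSmallest S) (Icc 1 #S) := fun v hv w hw h =>
  Nat.eq_of_dist_eq_zero <| Nat.le_zero.1 <| by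
    simpa [h] using dist_le_dist_nthSmallest hv hw

end NthSmallest

def IsArrangement {m : ℕ} (N : ℕ) (σ : Fin m → ℕ) : Prop :=
  Injective σ ∧ ∀ i, σ i ∈ Icc 1 N

def IsCode (N m d : ℕ) (A : Finset (Fin m → ℕ)) : Prop :=
  (∀ σ ∈ A, IsArrangement N σ) ∧ (A : Set (Fin m → ℕ)).Pairwise fun σ τ => d ≤ cheb σ τ

def codeSizes (N m d : ℕ) : Set ℕ :=
  {k | ∃ A, IsCode N m d A ∧ #A = k}

section Codes

variable {N m d : ℕ} {A : Finset (Fin m → ℕ)}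

lemma IsCode.card_le (hA : IsCode N m d A) : #A ≤ N ^ m :=
  calc #A ≤ #(Fintype.piFinset fun _ : Fin m => Icc 1 N) :=
        card_le_card fun σ hσ => Fintype.mem_piFinset.2 (hA.1 σ hσ).2
    _ = N ^ m := by simp

lemma Pnm_eq_sSup_codeSizes (N m d : ℕ) : Pnm N m d = sSup (codeSizes N m d) := by
  simp only [Pnm, codeSizes, IsCode, IsArrangement, and_assoc]
  rfl

lemma bddAbove_codeSizes : BddAbove (codeSizes N m d) :=
  ⟨N ^ m, by rintro _ ⟨A, hA, rfl⟩; exact hA.card_le⟩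

lemma exists_isCode_card_eq_Pnm (N m d : ℕ) : ∃ A, IsCode N m d A ∧ #A = Pnm N m d := by
  have hne : (codeSizes N m d).Nonempty := ⟨0, ∅, by simp [IsCode], card_empty⟩
  rw [Pnm_eq_sSup_codeSizes]
  exact Nat.sSup_mem hne bddAbove_codeSizes

lemma IsCode.card_le_Pnm (hA : IsCode N m d A) : #A ≤ Pnm N m d := by
  rw [Pnm_eq_sSup_codeSizes]
  exact le_csSup bddAbove_codeSizes ⟨A, hA, rfl⟩

end Codes

def gaps {m : ℕ} (N : ℕ) (σ : Fin m → ℕ) : Finset ℕ :=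
  Icc 1 N \ univ.image σ

noncomputable def glue {n m : ℕ} (σ : Fin m → ℕ) (τ : Fin n → ℕ) : Fin (n + m) → ℕ :=
  Fin.append (nthSmallest (gaps (n + m) σ) ∘ τ) σ

section Glue

variable {n m : ℕ} {σ σ' : Fin m → ℕ} {τ τ' : Fin n → ℕ}

lemma card_gaps (hσ : IsArrangement (n + m) σ) : #(gaps (n + m) σ) = n := by
  have hsub : univ.image σ ⊆ Icc 1 (n + m) := by
    rintro _ hx
    obtain ⟨i, -, rfl⟩ := mem_image.1 hx
    exact hσ.2 i
  rw [gaps, card_sdiff_of_subset hsub, card_image_of_injective _ hσ.1, Nat.card_Icc,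
    card_univ, Fintype.card_fin]
  omega

lemma nthSmallest_gaps_mem (hσ : IsArrangement (n + m) σ) {v : ℕ} (hv : v ∈ Icc 1 n) :
    nthSmallest (gaps (n + m) σ) v ∈ gaps (n + m) σ := by
  rw [← card_gaps hσ] at hv
  exact nthSmallest_mem hv

lemma nthSmallest_gaps_injOn (hσ : IsArrangement (n + m) σ) :
    Set.InjOn (nthSmallest (gaps (n + m) σ)) (Icc 1 n) := fun v hv w hw => by
  rw [← card_gaps hσ] at hv hw
  exact nthSmallest_injOn hv hw

lemma isArrangement_glue (hσ : IsArrangement (n + m) σ) (hτ : IsArrangement n τ) :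
    IsArrangement (n + m) (glue σ τ) := by
  have hgap j := mem_sdiff.1 (nthSmallest_gaps_mem hσ (hτ.2 j))
  refine ⟨Fin.append_injective_iff.2 ⟨?_, hσ.1, ?_⟩, Fin.addCases ?_ ?_⟩
  · exact fun j j' h => hτ.1 (nthSmallest_gaps_injOn hσ (hτ.2 j) (hτ.2 j') h)
  · exact fun j i h => (hgap j).2 (mem_image.2 ⟨i, mem_univ i, h.symm⟩)
  · simpa [glue] using fun j => (hgap j).1
  · simpa [glue] using hσ.2

lemma glue_injOn :
    Set.InjOn (fun p : (Fin m → ℕ) × (Fin n → ℕ) => glue p.1 p.2)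
      {p | IsArrangement (n + m) p.1 ∧ IsArrangement n p.2} := by
  rintro ⟨σ, τ⟩ ⟨hσ, hτ⟩ ⟨σ', τ'⟩ ⟨-, hτ'⟩ h
  have hσσ' : σ = σ' := funext fun i => by simpa [glue] using congrFun h (Fin.natAdd n i)
  subst hσσ'
  refine Prod.ext rfl (funext fun j => nthSmallest_gaps_injOn hσ (hτ.2 j) (hτ'.2 j) ?_)
  simpa [glue] using congrFun h (Fin.castAdd m j)

lemma cheb_le_cheb_glue_left (τ τ' : Fin n → ℕ) : cheb σ σ' ≤ cheb (glue σ τ) (glue σ' τ') :=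
  cheb_le_cheb_append_right _ _ _ _

lemma cheb_le_cheb_glue_right (hσ : IsArrangement (n + m) σ) (hτ : IsArrangement n τ)
    (hτ' : IsArrangement n τ') : cheb τ τ' ≤ cheb (glue σ τ) (glue σ τ') := by
  have hdist : ∀ v ∈ Icc 1 n, ∀ w ∈ Icc 1 n, Nat.dist v w ≤
      Nat.dist (nthSmallest (gaps (n + m) σ) v) (nthSmallest (gaps (n + m) σ) w) := by
    intro v hv w hw
    rw [← card_gaps hσ] at hv hw
    exact dist_le_dist_nthSmallest hv hw
  exact (cheb_le_cheb_comp hdist hτ.2 hτ'.2).trans (cheb_le_cheb_append_left _ _ σ σ)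

end Glue

lemma isCode_image_glue {n m d : ℕ} {A : Finset (Fin m → ℕ)} {B : Finset (Fin n → ℕ)}
    (hA : IsCode (n + m) m d A) (hB : IsCode n n d B) :
    IsCode (n + m) (n + m) d ((A ×ˢ B).image fun p => glue p.1 p.2) := by
  refine ⟨?_, ?_⟩
  · simp only [mem_image, mem_product]
    rintro _ ⟨⟨σ, τ⟩, ⟨hσ, hτ⟩, rfl⟩
    exact isArrangement_glue (hA.1 σ hσ) (hB.1 τ hτ)
  · simp only [coe_image, coe_product]
    rintro _ ⟨⟨σ, τ⟩, ⟨hσ, hτ⟩, rfl⟩ _ ⟨⟨σ', τ'⟩, ⟨hσ', hτ'⟩, rfl⟩ hne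
    by_cases hσσ' : σ = σ'
    · subst hσσ'
      have hττ' : τ ≠ τ' := by rintro rfl; exact hne rfl
      exact (hB.2 hτ hτ' hττ').trans
        (cheb_le_cheb_glue_right (hA.1 σ hσ) (hB.1 τ hτ) (hB.1 τ' hτ'))
    · exact (hA.2 hσ hσ' hσσ').trans (cheb_le_cheb_glue_left τ τ')

lemma card_image_glue {n m : ℕ} {A : Finset (Fin m → ℕ)} {B : Finset (Fin n → ℕ)}
    (hA : ∀ σ ∈ A, IsArrangement (n + m) σ) (hB : ∀ τ ∈ B, IsArrangement n τ) :
    #((A ×ˢ B).image fun p => glue p.1 p.2) = #A * #B := by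
  rw [card_image_of_injOn, card_product]
  exact glue_injOn.mono fun p hp => by
    obtain ⟨hσ, hτ⟩ := mem_product.1 hp
    exact ⟨hA _ hσ, hB _ hτ⟩

theorem stmt8_general (n d m : ℕ) : Pnm (n + m) m d * P n d ≤ P (n + m) d := by
  obtain ⟨A, hA, hAcard⟩ := exists_isCode_card_eq_Pnm (n + m) m d
  obtain ⟨B, hB, hBcard⟩ := exists_isCode_card_eq_Pnm n n d
  rw [P, P, ← hAcard, ← hBcard, ← card_image_glue hA.1 hB.1]
  exact (isCode_image_glue hA hB).card_le_Pnm

/-- For any `n ≥ d ≥ 1` and `m ≥ 1`, `P(n+m, d) ≥ P(n+m, m, d) · P(n, d)`. -/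
theorem stmt8 (n d m : ℕ) (hd : 1 ≤ d) (hn : d ≤ n) (hm : 1 ≤ m) :
    Pnm (n + m) m d * P n d ≤ P (n + m) d :=
  stmt8_general n d m
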